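/- Let X be a path-connected topological space and x₀ ∈ X. Let C_*(X) be the singular chain complex and C_*^{x₀}(X) the subcomplex generated by simplices mapping all vertices of Δ^k to x₀. Then there is a chain map η_* : C_*(X) → C_*^{x₀}(X) with η ∘ ι = id (where ι is the inclusion) and a chain homotopy s_* : C_*(X) → C_{*+1}(X) with ∂s + s∂ = ι η − id. Moreover, η_k maps each simplex to a single simplex and s_k maps each k-simplex to a sum of at most k+1 simplices. -/

import Mathlib

/-!
For every singular `n`-simplex `σ` choose a homotopy `H σ : Δⁿ × I → X` from `σ` to a simplex
with all vertices at `x₀`, constant when `σ` already has this property, and compatible with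
faces: `H (∂ⱼ σ) = H σ ∘ (δⱼ × id)`. In dimension `0` these are paths to `x₀`. In dimension
`n + 1` the faces prescribe `H σ` on `Δⁿ⁺¹ × {0} ∪ ∂Δⁿ⁺¹ × I` (consistently, by the simplicial
identities), and composing with a retraction of the prism onto that subspace extends it.

Then `η σ = H σ (·, 1)` and `s σ = (H σ)_* P`, where `P = ∑ᵢ (-1)ⁱ pᵢ` is the canonical
triangulation of `Δⁿ × I` into `n + 1` simplices. The identity `∂s + s∂ = η - id` is the
push-forward along `H σ` of the prism formula `∂P = Δⁿ × {1} - Δⁿ × {0} - P(∂Δⁿ)`.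
-/

open scoped Classical

open SimplexCategory CategoryTheory

noncomputable def Del (n : ℕ) : TopCat := SimplexCategory.toTop₀.obj (SimplexCategory.mk n)

noncomputable def face {X : TopCat} {n : ℕ} (j : Fin (n + 2)) (σ : C(Del (n+1), X)) :
    C(Del n, X) :=
  σ.comp (SimplexCategory.toTop₀.map (SimplexCategory.δ j)).hom

noncomputable def vert {n : ℕ} (j : Fin (n + 1)) : Del n :=
  ⟨fun i => if i = j then 1 else 0, by
    show (fun i => if i = j then (1 : ℝ) else 0) ∈ stdSimplex ℝ (Fin (n + 1))
    exact ⟨fun i => by dsimp only; split_ifs <;> norm_num, by simp [Finset.sum_ite_eq']⟩⟩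

noncomputable def bdry (X : TopCat) (n : ℕ) (c : C(Del (n+1), X) →₀ ℝ) :
    C(Del n, X) →₀ ℝ :=
  ∑ j : Fin (n + 2), ((-1 : ℝ) ^ (j : ℕ)) • Finsupp.mapDomain (face j) c

/-- The singular boundary operator on integral singular chains. -/
noncomputable def bdryZ (X : TopCat) (n : ℕ) (c : C(Del (n+1), X) →₀ ℤ) :
    C(Del n, X) →₀ ℤ :=
  ∑ j : Fin (n + 2), ((-1 : ℤ) ^ (j : ℕ)) • Finsupp.mapDomain (face j) c

open Simplicial

namespace Eilenberg

noncomputable section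

/-! ### Simplices and simplicial operators -/

abbrev Del.map {m n : ℕ} (f : ⦋m⦌ ⟶ ⦋n⦌) : C(Del m, Del n) := (toTop₀.map f).hom

lemma Del.ext {n : ℕ} {y z : Del n} (h : ∀ i, y.1 i = z.1 i) : y = z :=
  Subtype.ext (funext h)

lemma Del.sum_coord {n : ℕ} (y : Del n) : ∑ i, y.1 i = 1 := y.2.2

lemma Del.coord_nonneg {n : ℕ} (y : Del n) (i : Fin (n + 1)) : 0 ≤ y.1 i := y.2.1 i

lemma Del.continuous_coord {n : ℕ} (i : Fin (n + 1)) : Continuous fun y : Del n => y.1 i :=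
  (continuous_apply i).comp continuous_subtype_val

instance : Subsingleton (Del 0) := inferInstanceAs (Subsingleton (stdSimplex ℝ (Fin 1)))

lemma Del.map_coord {m n : ℕ} (f : ⦋m⦌ ⟶ ⦋n⦌) (y : Del m) (k : Fin (n + 1)) :
    (Del.map f y).1 k = ∑ a with f a = k, y.1 a :=
  FunOnFinite.linearMap_apply_apply (R := ℝ) (M := ℝ) f y.1 k

lemma Del.map_comp {l m n : ℕ} (f : ⦋l⦌ ⟶ ⦋m⦌) (g : ⦋m⦌ ⟶ ⦋n⦌) (y : Del l) :
    Del.map (f ≫ g) y = Del.map g (Del.map f y) := by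
  rw [Del.map, toTop₀.map_comp]; rfl

lemma Del.map_id {n : ℕ} (y : Del n) : Del.map (𝟙 ⦋n⦌) y = y := by
  rw [Del.map, toTop₀.map_id]; rfl

lemma vert_eq_vertex {n : ℕ} (j : Fin (n + 1)) :
    vert j = (stdSimplex.vertex j : stdSimplex ℝ (Fin (n + 1))) := by
  apply Del.ext; intro i; simp [vert, Pi.single_apply]

lemma Del.map_vert {m n : ℕ} (f : ⦋m⦌ ⟶ ⦋n⦌) (j : Fin (m + 1)) :
    Del.map f (vert j) = vert (f j) := by
  rw [vert_eq_vertex, vert_eq_vertex]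
  exact stdSimplex.map_vertex _ _

lemma Del.map_coord_apply_of_injective {m n : ℕ} (f : ⦋m⦌ ⟶ ⦋n⦌)
    (hf : Function.Injective f) (y : Del m) (a : Fin (m + 1)) :
    (Del.map f y).1 (f a) = y.1 a := by
  rw [Del.map_coord, Finset.sum_eq_single_of_mem a (by simp)]
  intro b hb hba
  simp at hb
  exact absurd (hf hb) hba

lemma Del.map_eq_vert {m n : ℕ} (f : ⦋m⦌ ⟶ ⦋n⦌) (c : Fin (n + 1)) (hf : ∀ a, f a = c)
    (y : Del m) : Del.map f y = vert c := by
  apply Del.ext; intro k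
  rw [Del.map_coord]
  by_cases hk : k = c
  · subst hk; simp [hf, vert, Del.sum_coord]
  · simp [hf, vert, hk, Ne.symm hk]

lemma Del.map_eq_self {n : ℕ} (g : ⦋n⦌ ⟶ ⦋n⦌) (y : Del n) (h : ∀ k, y.1 k ≠ 0 → g k = k) :
    Del.map g y = y := by
  apply Del.ext; intro k
  rw [Del.map_coord, Finset.sum_eq_single k]
  · intro b hb hbk
    by_contra hne
    exact hbk ((h b hne).symm.trans (by simpa using hb))
  · intro hk
    by_contra hne
    exact hk (by simpa using h k hne)

lemma val_succAbove {n : ℕ} (j : Fin (n + 2)) (l : Fin (n + 1)) :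
    (j.succAbove l : ℕ) = if (l : ℕ) < j then (l : ℕ) else (l : ℕ) + 1 := by
  simp only [Fin.succAbove, Fin.lt_def, Fin.val_castSucc]
  split_ifs <;> rfl

lemma δ_apply {n : ℕ} (j : Fin (n + 2)) (l : Fin (n + 1)) : δ j l = j.succAbove l := rfl

def faceRetraction {n : ℕ} (j : Fin (n + 2)) : ⦋n + 1⦌ ⟶ ⦋n⦌ :=
  Fin.lastCases (σ (Fin.last n)) (fun i => σ i) j

lemma δ_comp_faceRetraction {n : ℕ} (j : Fin (n + 2)) : δ j ≫ faceRetraction j = 𝟙 ⦋n⦌ := by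
  cases j using Fin.lastCases with
  | last => simp only [faceRetraction, Fin.lastCases_last]; exact δ_comp_σ_succ
  | cast i => simp only [faceRetraction, Fin.lastCases_castSucc]; exact δ_comp_σ_self

lemma faceRetraction_succAbove {n : ℕ} (j : Fin (n + 2)) (a : Fin (n + 1)) :
    faceRetraction j (j.succAbove a) = a := by
  have := congrArg (fun f : ⦋n⦌ ⟶ ⦋n⦌ => f a) (δ_comp_faceRetraction j)
  simpa [δ_apply] using this

lemma Del.map_faceRetraction_map_δ {n : ℕ} (j : Fin (n + 2)) (z : Del n) :
    Del.map (faceRetraction j) (Del.map (δ j) z) = z := by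
  rw [← Del.map_comp, δ_comp_faceRetraction, Del.map_id]

lemma Del.map_δ_coord_self {n : ℕ} (j : Fin (n + 2)) (z : Del n) :
    (Del.map (δ j) z).1 j = 0 := by
  rw [Del.map_coord]
  exact Finset.sum_eq_zero fun a ha => by simp [δ_apply] at ha

lemma Del.map_δ_coord_succAbove {n : ℕ} (j : Fin (n + 2)) (z : Del n) (a : Fin (n + 1)) :
    (Del.map (δ j) z).1 (j.succAbove a) = z.1 a :=
  Del.map_coord_apply_of_injective (δ j) (Fin.succAbove_right_injective) z a

lemma Del.map_δ_map_faceRetraction {n : ℕ} {j : Fin (n + 2)} {y : Del (n + 1)} (hy : y.1 j = 0) :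
    Del.map (δ j) (Del.map (faceRetraction j) y) = y := by
  rw [← Del.map_comp]
  refine Del.map_eq_self _ y fun k hk => ?_
  obtain ⟨a, rfl⟩ := Fin.exists_succAbove_eq (fun h : k = j => hk (h ▸ hy))
  rw [CategoryTheory.comp_apply, faceRetraction_succAbove, δ_apply]

/-! ### The triangulated prism -/

def stepAt {n : ℕ} (k : ℕ) : ⦋n⦌ ⟶ ⦋1⦌ :=
  SimplexCategory.mkHom ⟨fun l => if k ≤ (l : ℕ) then 1 else 0, fun a b hab => by
    dsimp only
    split_ifs <;> simp; omega⟩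

lemma stepAt_apply {n : ℕ} (k : ℕ) (l : Fin (n + 1)) :
    stepAt k l = if k ≤ (l : ℕ) then 1 else 0 := rfl

lemma δ_comp_stepAt_of_le {n : ℕ} {j : Fin (n + 2)} {k : ℕ} (h : k ≤ j) :
    δ j ≫ stepAt k = stepAt k := by
  refine ConcreteCategory.hom_ext _ _ fun l => ?_
  rw [CategoryTheory.comp_apply, stepAt_apply, stepAt_apply, δ_apply, val_succAbove]
  split_ifs <;> omega

lemma δ_comp_stepAt_of_lt {n : ℕ} {j : Fin (n + 2)} {k : ℕ} (h : (j : ℕ) < k) :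
    δ j ≫ stepAt k = stepAt (k - 1) := by
  refine ConcreteCategory.hom_ext _ _ fun l => ?_
  rw [CategoryTheory.comp_apply, stepAt_apply, stepAt_apply, δ_apply, val_succAbove]
  split_ifs <;> omega

def toUnitInterval : C(Del 1, unitInterval) :=
  ⟨stdSimplexHomeomorphUnitInterval, stdSimplexHomeomorphUnitInterval.continuous⟩

lemma toUnitInterval_vert_zero : toUnitInterval (vert 0) = 0 :=
  Subtype.ext (show (vert 0 : Del 1).1 1 = 0 by simp [vert])

lemma toUnitInterval_vert_one : toUnitInterval (vert 1) = 1 :=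
  Subtype.ext (show (vert 1 : Del 1).1 1 = 1 by simp [vert])

abbrev Cyl (n : ℕ) : TopCat := TopCat.of (Del n × unitInterval)

def atTime (n : ℕ) (t : unitInterval) : C(Del n, Cyl n) :=
  (ContinuousMap.id _).prodMk (ContinuousMap.const _ t)

/-- `y ↦ (y, y_k + ⋯ + y_n)`: the common face of the prism simplices `k - 1` and `k`. -/
def graph (n k : ℕ) : C(Del n, Cyl n) :=
  (ContinuousMap.id _).prodMk (toUnitInterval.comp (Del.map (stepAt k)))

/-- The simplex `(0,0), …, (i,0), (i,1), …, (n,1)` of the canonical triangulation of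
`Δⁿ × Δ¹ ≅ Δⁿ × I`. -/
def prism (n : ℕ) (i : Fin (n + 1)) : C(Del (n + 1), Cyl n) :=
  (Del.map (σ i)).prodMk (toUnitInterval.comp (Del.map (stepAt (i + 1))))

lemma graph_zero (n : ℕ) : graph n 0 = atTime n 1 := by
  ext y : 1
  simp only [graph, atTime, ContinuousMap.prod_eval, ContinuousMap.comp_apply]
  rw [Del.map_eq_vert _ 1 (fun a => by simp [stepAt_apply]), toUnitInterval_vert_one]
  rfl

lemma graph_last (n : ℕ) : graph n (n + 1) = atTime n 0 := by
  ext y : 1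
  simp only [graph, atTime, ContinuousMap.prod_eval, ContinuousMap.comp_apply]
  rw [Del.map_eq_vert _ 0 (fun a => by simp [stepAt_apply]; omega), toUnitInterval_vert_zero]
  rfl

lemma prism_comp_δ_castSucc (n : ℕ) (i : Fin (n + 1)) :
    (prism n i).comp (Del.map (δ i.castSucc)) = graph n i := by
  ext y : 1
  simp only [prism, graph, ContinuousMap.comp_apply, ContinuousMap.prod_eval, ← Del.map_comp,
    δ_comp_σ_self, Del.map_id, δ_comp_stepAt_of_lt (show (i.castSucc : ℕ) < i + 1 by simp)]
  rfl

lemma prism_comp_δ_succ (n : ℕ) (i : Fin (n + 1)) :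
    (prism n i).comp (Del.map (δ i.succ)) = graph n (i + 1) := by
  ext y : 1
  simp only [prism, graph, ContinuousMap.comp_apply, ContinuousMap.prod_eval, ← Del.map_comp,
    δ_comp_σ_succ, Del.map_id, δ_comp_stepAt_of_le (show (i : ℕ) + 1 ≤ i.succ by simp)]
  rfl

lemma prodMap_δ_comp_prism {n : ℕ} (j : Fin (n + 2)) (i : Fin (n + 1)) :
    ((Del.map (δ j)).prodMap (ContinuousMap.id unitInterval)).comp (prism n i) =
      if j ≤ i.castSucc then (prism (n + 1) i.succ).comp (Del.map (δ j.castSucc))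
      else (prism (n + 1) i.castSucc).comp (Del.map (δ j.succ)) := by
  ext y : 1
  split_ifs with h
  · simp only [prism, ContinuousMap.comp_apply, ContinuousMap.prod_eval,
      ContinuousMap.prodMap_apply, ContinuousMap.id_apply, Prod.map, ← Del.map_comp,
      δ_comp_σ_of_le h, δ_comp_stepAt_of_lt (show (j.castSucc : ℕ) < i.succ + 1 by
        simp [Fin.le_def] at h ⊢; omega)]
    simp
  · simp only [prism, ContinuousMap.comp_apply, ContinuousMap.prod_eval,
      ContinuousMap.prodMap_apply, ContinuousMap.id_apply, Prod.map, ← Del.map_comp,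
      δ_comp_σ_of_gt (not_le.1 h), δ_comp_stepAt_of_le (show (i.castSucc : ℕ) + 1 ≤ j.succ by
        simp [Fin.le_def] at h ⊢; omega)]
    simp

/-! ### Singular chains and the prism formula -/

lemma sum_sum_ite_lt_castSucc {M : Type*} [AddCommMonoid M] {n : ℕ}
    (f : Fin (n + 2) → Fin (n + 3) → M) :
    ∑ i, ∑ j, (if j < i.castSucc then f i j else 0) =
      ∑ i : Fin (n + 1), ∑ j : Fin (n + 2), if j ≤ i.castSucc then f i.succ j.castSucc else 0 := by
  rw [Fin.sum_univ_succ]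
  simp only [Fin.castSucc_zero, Fin.not_lt_zero, if_false, Finset.sum_const_zero, zero_add]
  refine Finset.sum_congr rfl fun i _ => ?_
  rw [Fin.sum_univ_castSucc, if_neg (by simp [Fin.lt_def]; omega), add_zero]
  refine Finset.sum_congr rfl fun j _ => if_congr ?_ rfl rfl
  simp only [Fin.lt_def, Fin.le_def, Fin.val_castSucc, Fin.val_succ]; omega

lemma sum_sum_ite_succ_lt {M : Type*} [AddCommMonoid M] {n : ℕ}
    (f : Fin (n + 2) → Fin (n + 3) → M) :
    ∑ i, ∑ j, (if i.succ < j then f i j else 0) =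
      ∑ i : Fin (n + 1), ∑ j : Fin (n + 2),
        if ¬ j ≤ i.castSucc then f i.castSucc j.succ else 0 := by
  rw [Fin.sum_univ_castSucc, Finset.sum_eq_zero (fun j _ => if_neg (by
    simp only [Fin.lt_def, Fin.val_succ, Fin.val_last]; omega)), add_zero]
  refine Finset.sum_congr rfl fun i _ => ?_
  rw [Fin.sum_univ_succ, if_neg (Fin.not_lt_zero _), zero_add]
  refine Finset.sum_congr rfl fun j _ => if_congr ?_ rfl rfl
  simp only [Fin.lt_def, Fin.le_def, Fin.val_castSucc, Fin.val_succ]; omega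

lemma sum_sum_eq_diag_add_offDiag {M : Type*} [AddCommMonoid M] {n : ℕ}
    (f : Fin (n + 2) → Fin (n + 3) → M) :
    ∑ i, ∑ j, f i j = ∑ i, f i i.castSucc + ∑ i, f i i.succ +
      ∑ i : Fin (n + 1), ∑ j : Fin (n + 2),
        if j ≤ i.castSucc then f i.succ j.castSucc else f i.castSucc j.succ := by
  have split : ∀ i j, f i j = (if j = i.castSucc then f i j else 0) +
      (if j = i.succ then f i j else 0) +
      ((if j < i.castSucc then f i j else 0) + (if i.succ < j then f i j else 0)) := by
    intro i j
    simp only [Fin.ext_iff, Fin.lt_def, Fin.val_castSucc, Fin.val_succ]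
    split_ifs <;> first | (exfalso; omega) | simp
  rw [Finset.sum_congr rfl fun i _ => Finset.sum_congr rfl fun j _ => split i j]
  simp only [Finset.sum_add_distrib, Finset.sum_ite_eq', Finset.mem_univ, if_true,
    sum_sum_ite_lt_castSucc, sum_sum_ite_succ_lt]
  congr 1
  rw [← Finset.sum_add_distrib]
  refine Finset.sum_congr rfl fun i _ => ?_
  rw [← Finset.sum_add_distrib]
  refine Finset.sum_congr rfl fun j _ => ?_
  split_ifs <;> simp

def cylMap {n : ℕ} (j : Fin (n + 2)) : C(Cyl n, Cyl (n + 1)) :=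
  (Del.map (δ j)).prodMap (ContinuousMap.id unitInterval)

def push {Y Z : TopCat} (ψ : C(Y, Z)) (k : ℕ) : (C(Del k, Y) →₀ ℤ) →ₗ[ℤ] (C(Del k, Z) →₀ ℤ) :=
  Finsupp.lmapDomain ℤ ℤ ψ.comp

lemma push_single {Y Z : TopCat} (ψ : C(Y, Z)) {k : ℕ} (τ : C(Del k, Y)) (b : ℤ) :
    push ψ k (Finsupp.single τ b) = Finsupp.single (ψ.comp τ) b :=
  Finsupp.mapDomain_single

lemma push_comp {Y Z W : TopCat} (ψ : C(Z, W)) (φ : C(Y, Z)) (k : ℕ) (c : C(Del k, Y) →₀ ℤ) :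
    push (ψ.comp φ) k c = push ψ k (push φ k c) := by
  simp only [push, Finsupp.lmapDomain_apply, ← Finsupp.mapDomain_comp]
  rfl

def boundary (X : TopCat) (n : ℕ) : (C(Del (n + 1), X) →₀ ℤ) →ₗ[ℤ] (C(Del n, X) →₀ ℤ) :=
  ∑ j : Fin (n + 2), (-1 : ℤ) ^ (j : ℕ) • Finsupp.lmapDomain ℤ ℤ (face j)

lemma boundary_apply (X : TopCat) (n : ℕ) (c : C(Del (n + 1), X) →₀ ℤ) :
    boundary X n c = bdryZ X n c := by
  simp [boundary, bdryZ]

lemma boundary_single {X : TopCat} {n : ℕ} (τ : C(Del (n + 1), X)) :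
    boundary X n (Finsupp.single τ 1) =
      ∑ j : Fin (n + 2), (-1 : ℤ) ^ (j : ℕ) • Finsupp.single (face j τ) 1 := by
  simp [boundary]

lemma boundary_push {Y Z : TopCat} (ψ : C(Y, Z)) (n : ℕ) (c : C(Del (n + 1), Y) →₀ ℤ) :
    boundary Z n (push ψ (n + 1) c) = push ψ n (boundary Y n c) := by
  suffices h : boundary Z n ∘ₗ push ψ (n + 1) = push ψ n ∘ₗ boundary Y n from
    LinearMap.congr_fun h c
  ext τ
  simp only [LinearMap.comp_apply, Finsupp.lsingle_apply, push_single, boundary_single, map_sum,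
    map_zsmul]
  rfl

def prismChain (n : ℕ) : C(Del (n + 1), Cyl n) →₀ ℤ :=
  ∑ i : Fin (n + 1), (-1 : ℤ) ^ (i : ℕ) • Finsupp.single (prism n i) 1

lemma face_eq_comp {X : TopCat} {n : ℕ} (j : Fin (n + 2)) (τ : C(Del (n + 1), X)) :
    face j τ = τ.comp (Del.map (δ j)) := rfl

def prismFaceTerm (m : ℕ) (i : Fin (m + 1)) (j : Fin (m + 2)) : C(Del m, Cyl m) →₀ ℤ :=
  (-1 : ℤ) ^ ((i : ℕ) + j) • Finsupp.single ((prism m i).comp (Del.map (δ j))) 1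

lemma boundary_prismChain (m : ℕ) :
    boundary (Cyl m) m (prismChain m) = ∑ i, ∑ j, prismFaceTerm m i j := by
  simp only [prismChain, map_sum, map_zsmul]
  refine Finset.sum_congr rfl fun i _ => ?_
  rw [boundary_single, Finset.smul_sum]
  simp only [prismFaceTerm, smul_smul, ← pow_add, face_eq_comp]

lemma sum_prismFaceTerm_diag (m : ℕ) :
    ∑ i, prismFaceTerm m i i.castSucc + ∑ i, prismFaceTerm m i i.succ =
      Finsupp.single (atTime m 1) 1 - Finsupp.single (atTime m 0) 1 := by
  have even (i : Fin (m + 1)) : (-1 : ℤ) ^ ((i : ℕ) + i.castSucc) = 1 := by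
    rw [Fin.val_castSucc, ← two_mul, pow_mul, neg_one_sq, one_pow]
  have odd (i : Fin (m + 1)) : (-1 : ℤ) ^ ((i : ℕ) + i.succ) = -1 := by
    rw [Fin.val_succ, ← add_assoc, ← two_mul, pow_succ, pow_mul, neg_one_sq, one_pow, one_mul]
  simp only [prismFaceTerm, even, odd, one_smul, neg_one_smul, Finset.sum_neg_distrib,
    ← sub_eq_add_neg, ← Finset.sum_sub_distrib]
  calc _ = ∑ i : Fin (m + 1),
        (Finsupp.single (graph m i) (1 : ℤ) - Finsupp.single (graph m (i + 1)) 1) :=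
        Finset.sum_congr rfl fun i _ => by rw [prism_comp_δ_castSucc, prism_comp_δ_succ]
    _ = _ := by
      rw [Fin.sum_univ_eq_sum_range (fun k => Finsupp.single (graph m k) (1 : ℤ) -
        Finsupp.single (graph m (k + 1)) 1), Finset.sum_range_sub', graph_zero, graph_last]

lemma prismFaceTerm_offDiag (n : ℕ) (i : Fin (n + 1)) (j : Fin (n + 2)) :
    (if j ≤ i.castSucc then prismFaceTerm (n + 1) i.succ j.castSucc
      else prismFaceTerm (n + 1) i.castSucc j.succ) =
      -((-1 : ℤ) ^ (j : ℕ) • (-1 : ℤ) ^ (i : ℕ) •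
        Finsupp.single ((cylMap j).comp (prism n i)) 1) := by
  rw [cylMap, prodMap_δ_comp_prism]
  split_ifs <;>
    simp only [prismFaceTerm, Fin.val_succ, Fin.val_castSucc, smul_smul, ← neg_smul, pow_add,
      pow_one] <;>
    ring_nf

lemma boundary_prismChain_zero :
    boundary (Cyl 0) 0 (prismChain 0) =
      Finsupp.single (atTime 0 1) 1 - Finsupp.single (atTime 0 0) 1 := by
  rw [boundary_prismChain, ← sum_prismFaceTerm_diag]
  simp only [Fin.sum_univ_succ, Fin.sum_univ_zero, add_zero]
  rfl

lemma boundary_prismChain_succ (n : ℕ) :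
    boundary (Cyl (n + 1)) (n + 1) (prismChain (n + 1)) +
      ∑ j : Fin (n + 2), (-1 : ℤ) ^ (j : ℕ) • push (cylMap j) (n + 1) (prismChain n) =
      Finsupp.single (atTime (n + 1) 1) 1 - Finsupp.single (atTime (n + 1) 0) 1 := by
  rw [boundary_prismChain, sum_sum_eq_diag_add_offDiag, sum_prismFaceTerm_diag, add_assoc,
    add_eq_left, Finset.sum_comm, ← Finset.sum_add_distrib]
  refine Finset.sum_eq_zero fun j _ => ?_
  simp only [prismChain, map_sum, map_zsmul, Finset.smul_sum, ← Finset.sum_add_distrib]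
  refine Finset.sum_eq_zero fun i _ => ?_
  rw [prismFaceTerm_offDiag, push_single, neg_add_cancel]

lemma card_support_sum_le {ι α M : Type*} [AddCommMonoid M] (s : Finset ι) (g : ι → α →₀ M)
    (hg : ∀ i ∈ s, (g i).support.card ≤ 1) : (∑ i ∈ s, g i).support.card ≤ s.card :=
  calc (∑ i ∈ s, g i).support.card ≤ (s.biUnion fun i => (g i).support).card :=
        Finset.card_le_card Finsupp.support_finsetSum
    _ ≤ ∑ i ∈ s, (g i).support.card := Finset.card_biUnion_le
    _ ≤ ∑ _i ∈ s, 1 := Finset.sum_le_sum hg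
    _ = s.card := by simp

lemma card_support_prismChain_le (n : ℕ) : (prismChain n).support.card ≤ n + 1 := by
  refine (card_support_sum_le _ _ fun i _ => ?_).trans (by simp)
  exact (Finset.card_le_card (Finsupp.support_smul.trans Finsupp.support_single_subset)).trans
    (by simp)

lemma atTime_comp_map_δ {n : ℕ} (j : Fin (n + 2)) (t : unitInterval) :
    (atTime (n + 1) t).comp (Del.map (δ j)) = (cylMap j).comp (atTime n t) := rfl

/-! ### Retraction of the prism onto its bottom and sides -/

/-- The radial projection from the point `(barycenter, 2)` above the prism `Δⁿ × I` maps `p` to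
the point `(b + (y - b) / D, 2 - (2 - t) / D)` of `Δⁿ × {0} ∪ ∂Δⁿ × I`, with `D` this scale. -/
def retractionScale (n : ℕ) (p : Cyl n) : ℝ :=
  max ((2 - p.2) / 2) (Finset.univ.sup' Finset.univ_nonempty fun i => 1 - (n + 1) * p.1.1 i)

lemma half_le_retractionScale (n : ℕ) (p : Cyl n) : (2 - p.2 : ℝ) / 2 ≤ retractionScale n p :=
  le_max_left _ _

lemma le_retractionScale (n : ℕ) (p : Cyl n) (i : Fin (n + 1)) :
    1 - (n + 1) * p.1.1 i ≤ retractionScale n p :=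
  le_max_of_le_right (Finset.le_sup' (fun i => 1 - (n + 1) * p.1.1 i) (Finset.mem_univ i))

lemma retractionScale_pos (n : ℕ) (p : Cyl n) : 0 < retractionScale n p :=
  lt_of_lt_of_le (by linarith [unitInterval.le_one p.2]) (half_le_retractionScale n p)

lemma retractionScale_le_one (n : ℕ) (p : Cyl n) : retractionScale n p ≤ 1 := by
  refine max_le (by linarith [unitInterval.nonneg p.2]) (Finset.sup'_le _ _ fun i _ => ?_)
  have := Del.coord_nonneg p.1 i
  nlinarith

lemma continuous_retractionScale (n : ℕ) : Continuous (retractionScale n) := by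
  refine Continuous.max (by fun_prop) (Continuous.finset_sup'_apply _ fun i _ => ?_)
  have := (Del.continuous_coord i).comp (continuous_fst (X := Del n) (Y := unitInterval))
  fun_prop

lemma retractionScale_eq_one_of_time {n : ℕ} {p : Cyl n} (h : (p.2 : ℝ) = 0) :
    retractionScale n p = 1 :=
  le_antisymm (retractionScale_le_one n p) (by simpa [h] using half_le_retractionScale n p)

lemma retractionScale_eq_one_of_coord {n : ℕ} {p : Cyl n} {i : Fin (n + 1)} (h : p.1.1 i = 0) :
    retractionScale n p = 1 :=
  le_antisymm (retractionScale_le_one n p) (by simpa [h] using le_retractionScale n p i)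

lemma retraction_coord_nonneg (n : ℕ) (p : Cyl n) (i : Fin (n + 1)) :
    0 ≤ (1 - 1 / retractionScale n p) / (n + 1) + p.1.1 i / retractionScale n p := by
  have hD := retractionScale_pos n p
  have key : (1 - (n + 1) * p.1.1 i) / retractionScale n p ≤ 1 :=
    (div_le_one hD).2 (le_retractionScale n p i)
  calc (0 : ℝ) ≤ (1 - (1 - (n + 1) * p.1.1 i) / retractionScale n p) / (n + 1) :=
        div_nonneg (by linarith) (by positivity)
    _ = _ := by field_simp; ring

def prismRetraction (n : ℕ) : C(Cyl n, Cyl n) where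
  toFun p :=
    (⟨fun i => (1 - 1 / retractionScale n p) / (n + 1) + p.1.1 i / retractionScale n p,
        fun i => retraction_coord_nonneg n p i, by
        have hD := retractionScale_pos n p
        simp only [Finset.sum_add_distrib, Finset.sum_const, Finset.card_univ, Fintype.card_fin,
          ← Finset.sum_div, Del.sum_coord, nsmul_eq_mul]
        push_cast
        field_simp
        ring⟩,
      ⟨2 - (2 - p.2) / retractionScale n p, by
        have := (div_le_iff₀ (retractionScale_pos n p)).2 (by
          linarith [half_le_retractionScale n p] : (2 - p.2 : ℝ) ≤ 2 * retractionScale n p)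
        linarith, by
        have := (le_div_iff₀ (retractionScale_pos n p)).2 (by
          nlinarith [retractionScale_le_one n p, unitInterval.le_one p.2] :
            1 * retractionScale n p ≤ (2 - p.2 : ℝ))
        linarith⟩)
  continuous_toFun := by
    have hD := continuous_retractionScale n
    have hne := fun p => (retractionScale_pos n p).ne'
    refine .prodMk (.subtype_mk (continuous_pi fun i => ?_) _) (.subtype_mk ?_ _)
    · have := (Del.continuous_coord i).comp (continuous_fst (X := Del n) (Y := unitInterval))
      fun_prop (disch := exact hne _)
    · fun_prop (disch := exact hne _)

lemma prismRetraction_coord (n : ℕ) (p : Cyl n) (i : Fin (n + 1)) :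
    (prismRetraction n p).1.1 i =
      (1 - 1 / retractionScale n p) / (n + 1) + p.1.1 i / retractionScale n p := rfl

lemma prismRetraction_time (n : ℕ) (p : Cyl n) :
    ((prismRetraction n p).2 : ℝ) = 2 - (2 - p.2) / retractionScale n p := rfl

lemma prismRetraction_eq_self {n : ℕ} {p : Cyl n} (h : retractionScale n p = 1) :
    prismRetraction n p = p := by
  refine Prod.ext (Del.ext fun i => ?_) (Subtype.ext ?_)
  · rw [prismRetraction_coord, h]; simp
  · rw [prismRetraction_time, h]; ring

lemma prismRetraction_eq_self_of_time {n : ℕ} {p : Cyl n} (h : (p.2 : ℝ) = 0) :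
    prismRetraction n p = p :=
  prismRetraction_eq_self (retractionScale_eq_one_of_time h)

lemma prismRetraction_eq_self_of_coord {n : ℕ} {p : Cyl n} {i : Fin (n + 1)} (h : p.1.1 i = 0) :
    prismRetraction n p = p :=
  prismRetraction_eq_self (retractionScale_eq_one_of_coord h)

lemma prismRetraction_time_eq_zero_or_coord_eq_zero (n : ℕ) (p : Cyl n) :
    ((prismRetraction n p).2 : ℝ) = 0 ∨ ∃ i, (prismRetraction n p).1.1 i = 0 := by
  have hD := retractionScale_pos n p
  rcases max_choice ((2 - p.2 : ℝ) / 2)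
    (Finset.univ.sup' Finset.univ_nonempty fun i => 1 - (n + 1) * p.1.1 i) with h | h
  · left
    have h2 : (2 - p.2 : ℝ) ≠ 0 := by linarith [unitInterval.le_one p.2]
    rw [prismRetraction_time, show retractionScale n p = (2 - p.2) / 2 from h]
    field_simp
    ring
  · right
    obtain ⟨i, -, hi⟩ := Finset.exists_mem_eq_sup' Finset.univ_nonempty
      fun i => 1 - (n + 1) * p.1.1 i
    refine ⟨i, ?_⟩
    have hDi : retractionScale n p = 1 - (n + 1) * p.1.1 i := by
      rw [show retractionScale n p = _ from h, hi]
    rw [prismRetraction_coord, hDi]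
    rw [hDi] at hD
    field_simp
    ring

/-! ### Normalizing homotopies -/

section Homotopies

variable {X : TopCat}

def IsPointed (x₀ : X) {n : ℕ} (σ : C(Del n, X)) : Prop := ∀ j : Fin (n + 1), σ (vert j) = x₀

lemma IsPointed.face {x₀ : X} {n : ℕ} {σ : C(Del (n + 1), X)} (h : IsPointed x₀ σ)
    (j : Fin (n + 2)) : IsPointed x₀ (face j σ) := fun a => by
  rw [face_eq_comp, ContinuousMap.comp_apply, Del.map_vert]
  exact h _

structure IsNormalizing (x₀ : X) (n : ℕ) (H : C(Del n, X) → C(Cyl n, X)) : Prop where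
  comp_atTime_zero : ∀ σ, (H σ).comp (atTime n 0) = σ
  apply_of_isPointed : ∀ σ, IsPointed x₀ σ → ∀ p, H σ p = σ p.1
  apply_vert_one : ∀ σ (j : Fin (n + 1)), H σ (vert j, 1) = x₀

def IsFaceCompatible {n : ℕ} (H : C(Del n, X) → C(Cyl n, X))
    (H' : C(Del (n + 1), X) → C(Cyl (n + 1), X)) : Prop :=
  ∀ σ j, H (face j σ) = (H' σ).comp (cylMap j)

def IsCoherent {n : ℕ} (H : C(Del n, X) → C(Cyl n, X)) : Prop :=
  ∀ (σ : C(Del (n + 1), X)) (y : Del (n + 1)) (t : unitInterval) (i j : Fin (n + 2)),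
    y.1 i = 0 → y.1 j = 0 →
      H (face i σ) (Del.map (faceRetraction i) y, t) =
        H (face j σ) (Del.map (faceRetraction j) y, t)

lemma IsFaceCompatible.apply_map_δ {n : ℕ} {H : C(Del n, X) → C(Cyl n, X)}
    {H' : C(Del (n + 1), X) → C(Cyl (n + 1), X)} (h : IsFaceCompatible H H')
    (σ : C(Del (n + 1), X)) (j : Fin (n + 2)) (y : Del n) (t : unitInterval) :
    H' σ (Del.map (δ j) y, t) = H (face j σ) (y, t) := by
  rw [h]; rfl

lemma face_face_of_le {n : ℕ} (σ : C(Del (n + 2), X)) {a b : Fin (n + 2)} (hab : a ≤ b) :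
    face b (face a.castSucc σ) = face a (face b.succ σ) := by
  ext y
  simp only [face_eq_comp, ContinuousMap.comp_apply, ← Del.map_comp, δ_comp_δ hab]

lemma IsFaceCompatible.isCoherent {n : ℕ} {H : C(Del n, X) → C(Cyl n, X)}
    {H' : C(Del (n + 1), X) → C(Cyl (n + 1), X)} (h : IsFaceCompatible H H') : IsCoherent H' := by
  suffices key : ∀ (σ : C(Del (n + 2), X)) y t (i j : Fin (n + 3)), i < j → y.1 i = 0 →
      y.1 j = 0 → H' (face i σ) (Del.map (faceRetraction i) y, t) =
        H' (face j σ) (Del.map (faceRetraction j) y, t) by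
    intro σ y t i j hi hj
    rcases lt_trichotomy i j with hij | hij | hij
    · exact key σ y t i j hij hi hj
    · subst hij; rfl
    · exact (key σ y t j i hij hj hi).symm
  -- `y` lies on the faces `a` and `b + 1`, so `y = δ (b + 1) (δ a w) = δ a (δ b w)` for some `w`,
  -- and both prescriptions equal the homotopy of the common face `∂ₐ ∂_{b+1} σ = ∂_b ∂ₐ σ` at `w`.
  intro σ y t i j hij hi hj
  obtain ⟨a, rfl⟩ := Fin.exists_castSucc_eq.2 (Fin.ne_last_of_lt hij)
  obtain ⟨b, rfl⟩ := Fin.exists_succ_eq.2 (Fin.ne_zero_of_lt hij)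
  have hab : a ≤ b := Fin.castSucc_lt_succ_iff.1 hij
  set z := Del.map (faceRetraction b.succ) y
  have hy : Del.map (δ b.succ) z = y := Del.map_δ_map_faceRetraction hj
  have hz : z.1 a = 0 := by
    rw [← Del.map_δ_coord_succAbove b.succ, Fin.succAbove_of_castSucc_lt _ _ hij, hy, hi]
  set w := Del.map (faceRetraction a) z
  have hzw : Del.map (δ a) w = z := Del.map_δ_map_faceRetraction hz
  have hyw : Del.map (δ a.castSucc) (Del.map (δ b) w) = y := by
    rw [← Del.map_comp, ← δ_comp_δ hab, Del.map_comp, hzw, hy]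
  rw [← hyw, Del.map_faceRetraction_map_δ, ← hzw, h.apply_map_δ, h.apply_map_δ,
    face_face_of_le σ hab]

def cylBoundaryPiece (n : ℕ) (o : Option (Fin (n + 1))) : Set (Cyl n) :=
  o.elim {q | (q.2 : ℝ) = 0} fun i => {q | q.1.1 i = 0}

lemma isClosed_cylBoundaryPiece (n : ℕ) (o : Option (Fin (n + 1))) :
    IsClosed (cylBoundaryPiece n o) := by
  cases o with
  | none => exact isClosed_eq (continuous_subtype_val.comp continuous_snd) continuous_const
  | some i => exact isClosed_eq ((Del.continuous_coord i).comp continuous_fst) continuous_const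

lemma prismRetraction_mem_iUnion_cylBoundaryPiece (n : ℕ) (p : Cyl n) :
    prismRetraction n p ∈ ⋃ o, cylBoundaryPiece n o := by
  rcases prismRetraction_time_eq_zero_or_coord_eq_zero n p with h | ⟨i, hi⟩
  · exact Set.mem_iUnion.2 ⟨none, h⟩
  · exact Set.mem_iUnion.2 ⟨some i, hi⟩

variable {n : ℕ}

def boundaryValue (H : C(Del n, X) → C(Cyl n, X)) (σ : C(Del (n + 1), X)) (q : Cyl (n + 1)) :
    X :=
  if h : ∃ i, q.1.1 i = 0 then H (face h.choose σ) (Del.map (faceRetraction h.choose) q.1, q.2)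
  else σ q.1

variable {H : C(Del n, X) → C(Cyl n, X)}

lemma boundaryValue_of_coord_eq_zero (hcoh : IsCoherent H) (σ : C(Del (n + 1), X))
    {q : Cyl (n + 1)} {i : Fin (n + 2)} (hi : q.1.1 i = 0) :
    boundaryValue H σ q = H (face i σ) (Del.map (faceRetraction i) q.1, q.2) := by
  have h : ∃ i, q.1.1 i = 0 := ⟨i, hi⟩
  rw [boundaryValue, dif_pos h]
  exact hcoh σ _ _ _ _ h.choose_spec hi

lemma boundaryValue_of_time_eq_zero (h0 : ∀ τ, (H τ).comp (atTime n 0) = τ)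
    (σ : C(Del (n + 1), X)) {q : Cyl (n + 1)} (ht : (q.2 : ℝ) = 0) :
    boundaryValue H σ q = σ q.1 := by
  rw [boundaryValue]
  split_ifs with h
  · rw [show q.2 = 0 from Subtype.ext ht]
    calc _ = face h.choose σ (Del.map (faceRetraction h.choose) q.1) :=
          DFunLike.congr_fun (h0 _) (Del.map (faceRetraction h.choose) q.1)
      _ = σ q.1 := by
          rw [face_eq_comp, ContinuousMap.comp_apply, Del.map_δ_map_faceRetraction h.choose_spec]
  · rfl

lemma continuousOn_boundaryValue (hcoh : IsCoherent H) (h0 : ∀ τ, (H τ).comp (atTime n 0) = τ)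
    (σ : C(Del (n + 1), X)) :
    ContinuousOn (boundaryValue H σ) (⋃ o, cylBoundaryPiece (n + 1) o) := by
  refine (locallyFinite_of_finite _).continuousOn_iUnion (isClosed_cylBoundaryPiece (n + 1))
    fun o => ?_
  cases o with
  | none =>
    exact ((map_continuous σ).comp continuous_fst).continuousOn.congr
      fun q hq => boundaryValue_of_time_eq_zero h0 σ hq
  | some i =>
    refine ((map_continuous (H (face i σ))).comp (.prodMk
      ((map_continuous (Del.map (faceRetraction i))).comp continuous_fst) continuous_snd)
      ).continuousOn.congr fun q hq => boundaryValue_of_coord_eq_zero hcoh σ hq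

def extendHomotopy (x₀ : X) (hcoh : IsCoherent H) (h0 : ∀ τ, (H τ).comp (atTime n 0) = τ)
    (σ : C(Del (n + 1), X)) : C(Cyl (n + 1), X) :=
  if IsPointed x₀ σ then σ.comp ContinuousMap.fst
  else ⟨boundaryValue H σ ∘ prismRetraction (n + 1),
    (continuousOn_boundaryValue hcoh h0 σ).comp_continuous
      (prismRetraction (n + 1)).continuous (prismRetraction_mem_iUnion_cylBoundaryPiece (n + 1))⟩

variable {x₀ : X}

lemma extendHomotopy_apply_of_coord_eq_zero (hcoh : IsCoherent H)
    (h0 : ∀ τ, (H τ).comp (atTime n 0) = τ)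
    {σ : C(Del (n + 1), X)} (hσ : ¬ IsPointed x₀ σ) {q : Cyl (n + 1)} {i : Fin (n + 2)}
    (hi : q.1.1 i = 0) :
    extendHomotopy x₀ hcoh h0 σ q = H (face i σ) (Del.map (faceRetraction i) q.1, q.2) := by
  rw [extendHomotopy, if_neg hσ, ContinuousMap.coe_mk, Function.comp_apply,
    prismRetraction_eq_self_of_coord hi, boundaryValue_of_coord_eq_zero hcoh σ hi]

lemma isNormalizing_extendHomotopy (hcoh : IsCoherent H) (hN : IsNormalizing x₀ n H) :
    IsNormalizing x₀ (n + 1) (extendHomotopy x₀ hcoh hN.comp_atTime_zero) where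
  comp_atTime_zero σ := by
    ext y
    by_cases hσ : IsPointed x₀ σ
    · rw [extendHomotopy, if_pos hσ]; rfl
    · have hq : ((y, 0) : Cyl (n + 1)).2.1 = 0 := rfl
      rw [extendHomotopy, if_neg hσ]
      show boundaryValue H σ (prismRetraction (n + 1) (y, 0)) = σ y
      rw [prismRetraction_eq_self_of_time hq,
        boundaryValue_of_time_eq_zero hN.comp_atTime_zero σ hq]
  apply_of_isPointed σ hσ p := by rw [extendHomotopy, if_pos hσ]; rfl
  apply_vert_one σ j := by
    by_cases hσ : IsPointed x₀ σ
    · rw [extendHomotopy, if_pos hσ]; exact hσ j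
    · obtain ⟨k, hk⟩ := exists_ne j
      have hz : (vert j : Del (n + 1)).1 k = 0 := if_neg hk
      rw [extendHomotopy_apply_of_coord_eq_zero hcoh _ hσ (q := (vert j, 1)) hz, Del.map_vert]
      exact hN.apply_vert_one _ _

lemma isFaceCompatible_extendHomotopy (hcoh : IsCoherent H) (hN : IsNormalizing x₀ n H) :
    IsFaceCompatible H (extendHomotopy x₀ hcoh hN.comp_atTime_zero) := by
  intro σ j
  ext ⟨y, t⟩
  by_cases hσ : IsPointed x₀ σ
  · rw [hN.apply_of_isPointed _ (hσ.face j), extendHomotopy, if_pos hσ]; rfl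
  · rw [ContinuousMap.comp_apply, cylMap, ContinuousMap.prodMap_apply, Prod.map,
      extendHomotopy_apply_of_coord_eq_zero hcoh _ hσ (Del.map_δ_coord_self j y),
      Del.map_faceRetraction_map_δ]
    rfl

def pathToBase [PathConnectedSpace X] (x₀ x : X) : Path x x₀ :=
  if h : x = x₀ then (Path.refl x₀).cast h rfl else PathConnectedSpace.somePath x x₀

lemma pathToBase_self [PathConnectedSpace X] (x₀ : X) (t : unitInterval) :
    pathToBase x₀ x₀ t = x₀ := by
  simp [pathToBase]

def baseHomotopy [PathConnectedSpace X] (x₀ : X) (σ : C(Del 0, X)) : C(Cyl 0, X) :=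
  (pathToBase x₀ (σ (vert 0))).toContinuousMap.comp ContinuousMap.snd

lemma isNormalizing_baseHomotopy [PathConnectedSpace X] (x₀ : X) :
    IsNormalizing x₀ 0 (baseHomotopy x₀) where
  comp_atTime_zero σ := by
    ext y
    rw [Subsingleton.elim y (vert 0)]
    exact (pathToBase x₀ _).source
  apply_of_isPointed σ hσ p := by
    rw [Subsingleton.elim p.1 (vert 0)]
    show pathToBase x₀ (σ (vert 0)) p.2 = _
    rw [hσ 0, pathToBase_self]
  apply_vert_one σ j := (pathToBase x₀ _).target

lemma isCoherent_baseHomotopy [PathConnectedSpace X] (x₀ : X) :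
    IsCoherent (baseHomotopy x₀) := by
  intro σ y t i j hi hj
  rcases eq_or_ne i j with rfl | hij
  · rfl
  · -- the coordinates of a point of `Δ¹` cannot both vanish
    have := Del.sum_coord y
    rw [Fin.sum_univ_two] at this
    fin_cases i <;> fin_cases j <;> simp_all

theorem exists_normalizing_homotopies [PathConnectedSpace X] (x₀ : X) :
    ∃ H : ∀ n, C(Del n, X) → C(Cyl n, X),
      (∀ n, IsNormalizing x₀ n (H n)) ∧ ∀ n, IsFaceCompatible (H n) (H (n + 1)) := by
  let Stage (n : ℕ) := {H : C(Del n, X) → C(Cyl n, X) // IsNormalizing x₀ n H ∧ IsCoherent H}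
  let stages : ∀ n, Stage n := fun n => Nat.rec
    ⟨baseHomotopy x₀, isNormalizing_baseHomotopy x₀, isCoherent_baseHomotopy x₀⟩
    (fun _ P => ⟨extendHomotopy x₀ P.2.2 P.2.1.comp_atTime_zero,
      isNormalizing_extendHomotopy P.2.2 P.2.1,
      (isFaceCompatible_extendHomotopy P.2.2 P.2.1).isCoherent⟩) n
  exact ⟨fun n => (stages n).1, fun n => (stages n).2.1,
    fun n => isFaceCompatible_extendHomotopy (stages n).2.2 (stages n).2.1⟩

end Homotopies

/-! ### The chain homotopy -/

section ChainHomotopy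

variable {X : TopCat} (H : ∀ n, C(Del n, X) → C(Cyl n, X))

def endSimplex (n : ℕ) (σ : C(Del n, X)) : C(Del n, X) := (H n σ).comp (atTime n 1)

def homotopyChain (n : ℕ) (σ : C(Del n, X)) : C(Del (n + 1), X) →₀ ℤ :=
  push (H n σ) (n + 1) (prismChain n)

lemma card_support_homotopyChain_le (n : ℕ) (σ : C(Del n, X)) :
    (homotopyChain H n σ).support.card ≤ n + 1 :=
  (Finset.card_le_card Finsupp.mapDomain_support).trans
    (Finset.card_image_le.trans (card_support_prismChain_le n))

variable {H}

lemma push_atTime_sub {n : ℕ} {σ : C(Del n, X)} (h0 : (H n σ).comp (atTime n 0) = σ) :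
    push (H n σ) n (Finsupp.single (atTime n 1) 1 - Finsupp.single (atTime n 0) 1) =
      Finsupp.single (endSimplex H n σ) 1 - Finsupp.single σ 1 := by
  rw [map_sub, push_single, push_single, h0, endSimplex]

lemma face_endSimplex {n : ℕ} (hface : IsFaceCompatible (H n) (H (n + 1)))
    (σ : C(Del (n + 1), X)) (j : Fin (n + 2)) :
    face j (endSimplex H (n + 1) σ) = endSimplex H n (face j σ) := by
  rw [endSimplex, endSimplex, hface σ j, face_eq_comp, ContinuousMap.comp_assoc,
    atTime_comp_map_δ]
  rfl

lemma bdryZ_mapDomain_endSimplex {n : ℕ} (hface : IsFaceCompatible (H n) (H (n + 1)))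
    (c : C(Del (n + 1), X) →₀ ℤ) :
    bdryZ X n (Finsupp.mapDomain (endSimplex H (n + 1)) c) =
      Finsupp.mapDomain (endSimplex H n) (bdryZ X n c) := by
  simp only [← boundary_apply, ← Finsupp.lmapDomain_apply ℤ ℤ]
  suffices h : boundary X n ∘ₗ Finsupp.lmapDomain ℤ ℤ (endSimplex H (n + 1)) =
      Finsupp.lmapDomain ℤ ℤ (endSimplex H n) ∘ₗ boundary X n from LinearMap.congr_fun h c
  ext σ
  simp [boundary_single, face_endSimplex hface]

lemma boundary_homotopyChain_zero (h0 : ∀ σ, (H 0 σ).comp (atTime 0 0) = σ)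
    (σ : C(Del 0, X)) :
    boundary X 0 (homotopyChain H 0 σ) =
      Finsupp.single (endSimplex H 0 σ) 1 - Finsupp.single σ 1 := by
  rw [homotopyChain, boundary_push, boundary_prismChain_zero, push_atTime_sub (h0 σ)]

lemma boundary_homotopyChain_succ {n : ℕ} (h0 : ∀ σ, (H (n + 1) σ).comp (atTime (n + 1) 0) = σ)
    (hface : IsFaceCompatible (H n) (H (n + 1))) (σ : C(Del (n + 1), X)) :
    boundary X (n + 1) (homotopyChain H (n + 1) σ) +
      ∑ j : Fin (n + 2), (-1 : ℤ) ^ (j : ℕ) • homotopyChain H n (face j σ) =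
      Finsupp.single (endSimplex H (n + 1) σ) 1 - Finsupp.single σ 1 := by
  have hterm : ∀ j : Fin (n + 2), (-1 : ℤ) ^ (j : ℕ) • homotopyChain H n (face j σ) =
      push (H (n + 1) σ) (n + 1) ((-1 : ℤ) ^ (j : ℕ) • push (cylMap j) (n + 1) (prismChain n)) :=
    fun j => by rw [homotopyChain, hface σ j, push_comp, map_zsmul]
  rw [Finset.sum_congr rfl fun j _ => hterm j, ← map_sum, homotopyChain, boundary_push, ← map_add,
    boundary_prismChain_succ, push_atTime_sub (h0 σ)]

lemma bdryZ_sum_homotopyChain_zero (h0 : ∀ σ, (H 0 σ).comp (atTime 0 0) = σ)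
    (c : C(Del 0, X) →₀ ℤ) :
    bdryZ X 0 (c.sum fun σ a => a • homotopyChain H 0 σ) =
      Finsupp.mapDomain (endSimplex H 0) c - c := by
  rw [← boundary_apply, ← Finsupp.linearCombination_apply, ← Finsupp.lmapDomain_apply ℤ ℤ]
  suffices h : boundary X 0 ∘ₗ Finsupp.linearCombination ℤ (homotopyChain H 0) =
      Finsupp.lmapDomain ℤ ℤ (endSimplex H 0) - LinearMap.id from LinearMap.congr_fun h c
  ext σ
  simp [boundary_homotopyChain_zero h0]

lemma bdryZ_sum_homotopyChain_succ {n : ℕ}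
    (h0 : ∀ σ, (H (n + 1) σ).comp (atTime (n + 1) 0) = σ)
    (hface : IsFaceCompatible (H n) (H (n + 1))) (c : C(Del (n + 1), X) →₀ ℤ) :
    bdryZ X (n + 1) (c.sum fun σ a => a • homotopyChain H (n + 1) σ) +
        (bdryZ X n c).sum (fun σ a => a • homotopyChain H n σ) =
      Finsupp.mapDomain (endSimplex H (n + 1)) c - c := by
  rw [← boundary_apply, ← boundary_apply, ← Finsupp.linearCombination_apply,
    ← Finsupp.linearCombination_apply, ← Finsupp.lmapDomain_apply ℤ ℤ]
  suffices h : boundary X (n + 1) ∘ₗ Finsupp.linearCombination ℤ (homotopyChain H (n + 1)) +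
      Finsupp.linearCombination ℤ (homotopyChain H n) ∘ₗ boundary X n =
      Finsupp.lmapDomain ℤ ℤ (endSimplex H (n + 1)) - LinearMap.id from LinearMap.congr_fun h c
  ext σ
  simp [boundary_single, ← boundary_homotopyChain_succ h0 hface σ]

lemma endSimplex_eq_self {x₀ : X} {n : ℕ} (hN : IsNormalizing x₀ n (H n)) {σ : C(Del n, X)}
    (hσ : IsPointed x₀ σ) : endSimplex H n σ = σ := by
  ext y
  exact hN.apply_of_isPointed σ hσ (y, 1)

end ChainHomotopy

end

end Eilenberg

/-- **Eilenberg.** For a path-connected space `X` with basepoint `x₀` there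
are a chain map `η` (given simplexwise by `e`, sending each simplex to a single simplex with
all vertices at `x₀`, and fixing simplices which already have all vertices at `x₀`, so that
`η ∘ ι = id`) and a chain homotopy `s` (sending each `k`-simplex to a chain of at most
`k+1` simplices) with `∂s + s∂ = ιη − id`. -/
theorem eilenberg_pointed_chain_homotopy
    (X : TopCat) [PathConnectedSpace X] (x₀ : X) :
    ∃ (e : ∀ n : ℕ, C(Del n, X) → C(Del n, X))
      (s : ∀ n : ℕ, C(Del n, X) → (C(Del (n + 1), X) →₀ ℤ)),
      -- η takes values in simplices with all vertices at x₀
      (∀ (n : ℕ) (σ : C(Del n, X)) (j : Fin (n + 1)), e n σ (vert j) = x₀) ∧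
      -- η ∘ ι = id
      (∀ (n : ℕ) (σ : C(Del n, X)),
        (∀ j : Fin (n + 1), σ (vert j) = x₀) → e n σ = σ) ∧
      -- η is a chain map
      (∀ (n : ℕ) (c : C(Del (n + 1), X) →₀ ℤ),
        bdryZ X n (Finsupp.mapDomain (e (n + 1)) c) =
          Finsupp.mapDomain (e n) (bdryZ X n c)) ∧
      -- s sends a k-simplex to a sum of at most k+1 simplices
      (∀ (n : ℕ) (σ : C(Del n, X)), (s n σ).support.card ≤ n + 1) ∧
      -- ∂ s = ι η − id in degree 0
      (∀ c : C(Del 0, X) →₀ ℤ,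
        bdryZ X 0 (c.sum fun σ a => a • s 0 σ) =
          Finsupp.mapDomain (e 0) c - c) ∧
      -- ∂ s + s ∂ = ι η − id in positive degrees
      (∀ (n : ℕ) (c : C(Del (n + 1), X) →₀ ℤ),
        bdryZ X (n + 1) (c.sum fun σ a => a • s (n + 1) σ)
          + (bdryZ X n c).sum (fun σ a => a • s n σ)
          = Finsupp.mapDomain (e (n + 1)) c - c) := by
  obtain ⟨H, hN, hF⟩ := Eilenberg.exists_normalizing_homotopies x₀
  exact ⟨Eilenberg.endSimplex H, Eilenberg.homotopyChain H,
    fun n σ j => (hN n).apply_vert_one σ j,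
    fun n σ hσ => Eilenberg.endSimplex_eq_self (hN n) hσ,
    fun n => Eilenberg.bdryZ_mapDomain_endSimplex (hF n),
    Eilenberg.card_support_homotopyChain_le H,
    Eilenberg.bdryZ_sum_homotopyChain_zero (hN 0).comp_atTime_zero,
    fun n => Eilenberg.bdryZ_sum_homotopyChain_succ (hN (n + 1)).comp_atTime_zero (hF n)⟩
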